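/- arXiv:1704.04165 — 3 statements merged into one kernel-verified Lean document; each statement's English description precedes it below -/
import Mathlib

section
/- Assume q is odd and α ∈ F is not a square. Then the number of invertible 4×4 matrices g over F satisfying g · C_{[2,2]}(α) = C_{[2,2]}(α) · g equals (q^4 − 1)·(q^4 − q^2), the order of GL_2 over a field with q^2 elements. -/
open Polynomial Matrix

namespace Stmt9Aux

noncomputable section

variable {F : Type*} [Field F] (α : F)

def Jm : Matrix (Fin 2) (Fin 2) F := !![0, 1; α, 0]

lemma eval₂_f_eq_zero :
    eval₂ (algebraMap F (Matrix (Fin 2) (Fin 2) F)) (Jm α) (X ^ 2 - C α) = 0 := by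
  rw [eval₂_sub, eval₂_X_pow, eval₂_C]
  ext i j
  fin_cases i <;> fin_cases j <;>
    simp [Jm, pow_two, Matrix.mul_apply, Fin.sum_univ_two, Matrix.algebraMap_eq_diagonal]

/-- The ring hom from the field `E = F[X]/(X²-α)` to `2×2` matrices sending the root to `Jm`. -/
def φ : AdjoinRoot (X ^ 2 - C α : F[X]) →+* Matrix (Fin 2) (Fin 2) F :=
  Ideal.Quotient.lift (Ideal.span {(X ^ 2 - C α : F[X])})
    (eval₂RingHom' (algebraMap F (Matrix (Fin 2) (Fin 2) F)) (Jm α)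
      (fun a => Algebra.commutes a (Jm α)))
    (by
      intro a ha
      rw [Ideal.mem_span_singleton] at ha
      obtain ⟨c, rfl⟩ := ha
      rw [_root_.map_mul]
      have : (eval₂RingHom' (algebraMap F (Matrix (Fin 2) (Fin 2) F)) (Jm α)
          (fun a => Algebra.commutes a (Jm α))) (X ^ 2 - C α) = 0 := eval₂_f_eq_zero α
      rw [this, zero_mul])

lemma φ_mk (p : F[X]) :
    φ α (AdjoinRoot.mk _ p) = eval₂ (algebraMap F (Matrix (Fin 2) (Fin 2) F)) (Jm α) p := rfl

lemma φ_root : φ α (AdjoinRoot.root _) = Jm α := by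
  rw [AdjoinRoot.root, φ_mk, eval₂_X]

def e4 : Fin 2 × Fin 2 ≃ Fin 4 := finProdFinEquiv

/-- The ring hom from `2×2` matrices over `E` to `4×4` matrices over `F`. -/
def Φ : Matrix (Fin 2) (Fin 2) (AdjoinRoot (X ^ 2 - C α : F[X])) →+* Matrix (Fin 4) (Fin 4) F :=
  ((Matrix.reindexAlgEquiv F F
      e4).toRingEquiv.toRingHom).comp
    ((Matrix.compRingEquiv (Fin 2) (Fin 2) F).toRingHom.comp ((φ α).mapMatrix))

lemma Φ_apply (M : Matrix (Fin 2) (Fin 2) (AdjoinRoot (X ^ 2 - C α : F[X]))) (i j : Fin 4) :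
    Φ α M i j = φ α (M (e4.symm i).1 (e4.symm j).1) (e4.symm i).2 (e4.symm j).2 := rfl

@[simp] lemma e4_symm_0 : e4.symm 0 = (0,0) := rfl
@[simp] lemma e4_symm_1 : e4.symm 1 = (0,1) := rfl
@[simp] lemma e4_symm_2 : e4.symm 2 = (1,0) := rfl
@[simp] lemma e4_symm_3 : e4.symm 3 = (1,1) := rfl

lemma φ_mk_lin (x y : F) : φ α (AdjoinRoot.mk _ (C x + C y * X)) = !![x, y; α * y, x] := by
  have h1 : (AdjoinRoot.mk (X ^ 2 - C α : F[X])) (C x + C y * X) =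
      AdjoinRoot.mk _ (C x) + AdjoinRoot.mk _ (C y) * AdjoinRoot.mk _ X := by
    rw [map_add, _root_.map_mul]
  rw [h1, map_add, _root_.map_mul, φ_mk, φ_mk, φ_mk, eval₂_C, eval₂_C, eval₂_X]
  ext i j
  fin_cases i <;> fin_cases j <;>
    simp [Jm, Matrix.algebraMap_eq_diagonal, Matrix.mul_apply, Fin.sum_univ_two, mul_comm]

def Cmat : Matrix (Fin 4) (Fin 4) F := !![0, 1, 0, 0; α, 0, 0, 0; 0, 0, 0, 1; 0, 0, α, 0]

lemma Φ_scalar_root :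
    Φ α (Matrix.scalar (Fin 2) (AdjoinRoot.root (X ^ 2 - C α : F[X]))) = Cmat α := by
  ext i j
  rw [Φ_apply]
  fin_cases i <;> fin_cases j <;>
    simp [Matrix.scalar_apply, Matrix.diagonal, φ_root, Jm, Cmat, Matrix.vecHead, Matrix.vecTail]

lemma mem_range_iff (g : Matrix (Fin 4) (Fin 4) F) :
    g * Cmat α = Cmat α * g ↔ g ∈ Set.range (Φ α) := by
  constructor
  · intro h
    have key : ∀ i j, ∑ k, g i k * (Cmat α) k j = ∑ k, (Cmat α) i k * g k j := fun i j => by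
      rw [← Matrix.mul_apply, ← Matrix.mul_apply, h]
    have h00 := key 0 0; have h01 := key 0 1; have h02 := key 0 2; have h03 := key 0 3
    have h20 := key 2 0; have h21 := key 2 1; have h22 := key 2 2; have h23 := key 2 3
    simp [Cmat, Fin.sum_univ_four, Matrix.vecHead, Matrix.vecTail] at h00 h01 h02 h03 h20 h21 h22 h23
    refine ⟨!![AdjoinRoot.mk _ (C (g 0 0) + C (g 0 1) * X), AdjoinRoot.mk _ (C (g 0 2) + C (g 0 3) * X);
               AdjoinRoot.mk _ (C (g 2 0) + C (g 2 1) * X), AdjoinRoot.mk _ (C (g 2 2) + C (g 2 3) * X)], ?_⟩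
    ext i j
    rw [Φ_apply]
    fin_cases i <;> fin_cases j <;>
      simp [φ_mk_lin, -map_add] <;>
      first
        | rfl
        | linear_combination h00 | linear_combination h01 | linear_combination h02
        | linear_combination h03 | linear_combination h20 | linear_combination h21
        | linear_combination h22 | linear_combination h23
  · rintro ⟨M, rfl⟩
    rw [← Φ_scalar_root, ← _root_.map_mul, ← _root_.map_mul,
      (Matrix.scalar_commute _ (fun r' => Commute.all _ r') M).eq]

end

end Stmt9Aux

open Stmt9Aux Polynomial in
/-- Assume `q` is odd and `α ∈ F` is not a square.  Then the number of invertible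
`4×4` matrices `g` over `F` with `g · C_{[2,2]}(α) = C_{[2,2]}(α) · g` equals
`(q⁴ − 1)·(q⁴ − q²)`, the order of `GL₂` over a field with `q²` elements. -/
theorem stmt_9 (F : Type*) [Field F] [Fintype F] (q : ℕ) (hq : Fintype.card F = q)
    (hodd : Odd q) (α : F) (hns : ¬ ∃ γ : F, α = γ ^ 2) :
    (Nat.card {g : Matrix (Fin 4) (Fin 4) F // IsUnit g ∧
        g * !![0, 1, 0, 0; α, 0, 0, 0; 0, 0, 0, 1; 0, 0, α, 0] =
          !![0, 1, 0, 0; α, 0, 0, 0; 0, 0, 0, 1; 0, 0, α, 0] * g} : ℤ) =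
      ((q : ℤ) ^ 4 - 1) * ((q : ℤ) ^ 4 - (q : ℤ) ^ 2) := by
  classical
  have hirr : Irreducible (X ^ 2 - C α : F[X]) :=
    X_pow_sub_C_irreducible_of_prime Nat.prime_two (fun b hb => hns ⟨b, hb.symm⟩)
  haveI : Fact (Irreducible (X ^ 2 - C α : F[X])) := ⟨hirr⟩
  set E := AdjoinRoot (X ^ 2 - C α : F[X]) with hE
  have hmonic : (X ^ 2 - C α : F[X]).Monic := monic_X_pow_sub_C α two_ne_zero
  let pb := AdjoinRoot.powerBasis' hmonic
  haveI : Module.Finite F E := Module.Finite.of_basis pb.basis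
  haveI : Finite E := Module.finite_of_finite F
  haveI : Fintype E := Fintype.ofFinite E
  have hcardE : Fintype.card E = q ^ 2 := by
    rw [Module.card_eq_pow_finrank (K := F) (V := E), hq, pb.finrank]
    norm_num [pb, AdjoinRoot.powerBasis']
  have hΦinj : Function.Injective (Φ α) := by
    intro M N hMN
    apply Matrix.map_injective (φ α).injective
    apply (Matrix.compRingEquiv (Fin 2) (Fin 2) F).injective
    apply (Matrix.reindexAlgEquiv F F e4).injective
    exact hMN
  rw [show (!![0, 1, 0, 0; α, 0, 0, 0; 0, 0, 0, 1; 0, 0, α, 0] : Matrix (Fin 4) (Fin 4) F)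
      = Cmat α from rfl]
  have hbij : Function.Bijective (fun u : GL (Fin 2) E =>
      (⟨Φ α u, ⟨Units.map (Φ α).toMonoidHom u, rfl⟩, (mem_range_iff α _).2 ⟨u, rfl⟩⟩ :
        {g : Matrix (Fin 4) (Fin 4) F // IsUnit g ∧ g * Cmat α = Cmat α * g})) := by
    constructor
    · intro u v huv
      exact Units.ext (hΦinj (congrArg Subtype.val huv))
    · rintro ⟨g, hu, hc⟩
      obtain ⟨M, rfl⟩ := (mem_range_iff α g).1 hc
      obtain ⟨u, hu⟩ := hu
      have h1 : (u : Matrix (Fin 4) (Fin 4) F) * Cmat α = Cmat α * u := by rw [hu]; exact hc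
      have hcom : Commute (↑u : Matrix (Fin 4) (Fin 4) F) (Cmat α) := by rw [hu]; exact hc
      have hc' : (↑u⁻¹ : Matrix (Fin 4) (Fin 4) F) * Cmat α = Cmat α * (↑u⁻¹ : Matrix (Fin 4) (Fin 4) F) :=
        hcom.units_inv_left.eq
      obtain ⟨N, hN⟩ := (mem_range_iff α _).1 hc'
      have hMN : M * N = 1 := hΦinj (by
        rw [_root_.map_mul, hN, _root_.map_one, ← hu, Units.mul_inv])
      have hNM : N * M = 1 := hΦinj (by
        rw [_root_.map_mul, hN, _root_.map_one, ← hu, Units.inv_mul])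
      exact ⟨⟨M, N, hMN, hNM⟩, Subtype.ext rfl⟩
  rw [show (Nat.card {g : Matrix (Fin 4) (Fin 4) F // IsUnit g ∧
        g * Cmat α = Cmat α * g}) = Nat.card (GL (Fin 2) E) from
      (Nat.card_congr (Equiv.ofBijective _ hbij)).symm]
  rw [Matrix.card_GL_field, Fin.prod_univ_two]
  have h1 : 1 ≤ q ^ 4 := Nat.one_le_pow _ _ (by
    have := Fintype.one_lt_card (α := F); omega)
  have h2 : q ^ 2 ≤ q ^ 4 := Nat.pow_le_pow_right (by
    have := Fintype.one_lt_card (α := F); omega) (by omega)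
  have e1 : Fintype.card E ^ 2 - Fintype.card E ^ ((0 : Fin 2) : ℕ) = q ^ 4 - 1 := by
    rw [hcardE]; norm_num [← pow_mul]
  have e2 : Fintype.card E ^ 2 - Fintype.card E ^ ((1 : Fin 2) : ℕ) = q ^ 4 - q ^ 2 := by
    rw [hcardE]; norm_num [← pow_mul]
  rw [e1, e2, Nat.cast_mul, Nat.cast_sub h1, Nat.cast_sub h2]
  push_cast
  ring
end

section
/- Assume q is odd and α ∈ F with α ≠ 0. Then the group {g ∈ SL_4(F) : g · C_{[2,1,1]}(α) = C_{[2,1,1]}(α) · g} is isomorphic as a group to GL_3(F). -/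
open Matrix

namespace Stmt11Aux

variable {F : Type*} [Field F]

noncomputable section

def e14 : Fin 1 ⊕ Fin 3 ≃ Fin 4 := finSumFinEquiv

def psi (M : Matrix (Fin 3) (Fin 3) F) : Matrix (Fin 4) (Fin 4) F :=
  (fromBlocks ((M.det)⁻¹ • (1 : Matrix (Fin 1) (Fin 1) F)) 0 0 M).submatrix e14.symm e14.symm

def Dm (α : F) : Matrix (Fin 4) (Fin 4) F :=
  (fromBlocks ((3*α) • (1 : Matrix (Fin 1) (Fin 1) F)) 0 0
    ((-α) • (1 : Matrix (Fin 3) (Fin 3) F))).submatrix e14.symm e14.symm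

lemma psi_mul (M N : Matrix (Fin 3) (Fin 3) F) : psi M * psi N = psi (M * N) := by
  unfold psi
  rw [submatrix_mul_equiv, fromBlocks_multiply]
  simp [smul_mul_smul_comm, Matrix.det_mul, mul_inv, smul_smul]

lemma psi_one : psi (1 : Matrix (Fin 3) (Fin 3) F) = 1 := by
  unfold psi
  rw [show (fromBlocks ((1:Matrix (Fin 3) (Fin 3) F).det⁻¹ • (1 : Matrix (Fin 1) (Fin 1) F)) 0 0 1)
      = (1 : Matrix (Fin 1 ⊕ Fin 3) (Fin 1 ⊕ Fin 3) F) by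
    simp [Matrix.fromBlocks_one], submatrix_one_equiv]

lemma det_psi {M : Matrix (Fin 3) (Fin 3) F} (h : M.det ≠ 0) : (psi M).det = 1 := by
  unfold psi
  rw [show ((fromBlocks ((M.det)⁻¹ • (1 : Matrix (Fin 1) (Fin 1) F)) 0 0 M).submatrix
        e14.symm e14.symm).det
      = (fromBlocks ((M.det)⁻¹ • (1 : Matrix (Fin 1) (Fin 1) F)) 0 0 M).det from
    Matrix.det_submatrix_equiv_self _ _, det_fromBlocks_zero₂₁]
  simp [inv_mul_cancel₀ h]

lemma psi_comm (α : F) (M : Matrix (Fin 3) (Fin 3) F) : psi M * Dm α = Dm α * psi M := by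
  unfold psi Dm
  rw [submatrix_mul_equiv, submatrix_mul_equiv, fromBlocks_multiply, fromBlocks_multiply]
  simp [smul_smul, mul_comm]

lemma psi_inj : Function.Injective (psi (F := F)) := by
  intro M N h
  unfold psi at h
  have := congrArg (fun X => Matrix.toBlocks₂₂ (X.submatrix e14 e14)) h
  simpa [Matrix.submatrix_submatrix, Equiv.self_comp_symm, Matrix.toBlocks_fromBlocks₂₂] using this

lemma submatrix_mul_e (X Y : Matrix (Fin 4) (Fin 4) F) :
    (X * Y).submatrix e14 e14 = X.submatrix e14 e14 * Y.submatrix e14 e14 :=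
  (submatrix_mul_equiv X Y e14 e14 e14).symm

lemma exists_psi {α : F} (h4 : (4:F)*α ≠ 0) (h : Matrix (Fin 4) (Fin 4) F)
    (hc : h * Dm α = Dm α * h) (hd : h.det = 1) :
    ∃ E : Matrix (Fin 3) (Fin 3) F, E.det ≠ 0 ∧ h = psi E := by
  set h' := h.submatrix e14 e14 with hh'
  have hre : h = h'.submatrix e14.symm e14.symm := by
    simp [hh', Matrix.submatrix_submatrix, Equiv.symm_comp_self]
  set A := h'.toBlocks₁₁ with hA
  set B := h'.toBlocks₁₂ with hB
  set C := h'.toBlocks₂₁ with hC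
  set E := h'.toBlocks₂₂ with hE
  have hblocks : h' = fromBlocks A B C E := (fromBlocks_toBlocks h').symm
  have hc' : h' * (fromBlocks ((3*α) • (1 : Matrix (Fin 1) (Fin 1) F)) 0 0 ((-α) • 1))
      = (fromBlocks ((3*α) • (1 : Matrix (Fin 1) (Fin 1) F)) 0 0 ((-α) • 1)) * h' := by
    have := congrArg (fun X => X.submatrix e14 e14) hc
    simp only [submatrix_mul_e] at this
    unfold Dm at this
    simpa [hh', Matrix.submatrix_submatrix, Equiv.symm_comp_self] using this
  rw [hblocks, fromBlocks_multiply, fromBlocks_multiply] at hc'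
  have hB0 : B = 0 := by
    have h12 := congrArg Matrix.toBlocks₁₂ hc'
    simp only [toBlocks_fromBlocks₁₂, Matrix.mul_zero, Matrix.zero_mul, add_zero, zero_add,
      Matrix.mul_smul, Matrix.smul_mul, Matrix.mul_one, Matrix.one_mul] at h12
    have hz : ((4:F)*α) • B = 0 := by
      rw [show ((4:F)*α) = (3*α) + α by ring, add_smul, ← h12]
      simp
    exact (smul_eq_zero.mp hz).resolve_left h4
  have hC0 : C = 0 := by
    have h21 := congrArg Matrix.toBlocks₂₁ hc'
    simp only [toBlocks_fromBlocks₂₁, Matrix.mul_zero, Matrix.zero_mul, add_zero, zero_add,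
      Matrix.mul_smul, Matrix.smul_mul, Matrix.mul_one, Matrix.one_mul] at h21
    have hz : ((4:F)*α) • C = 0 := by
      rw [show ((4:F)*α) = (3*α) + α by ring, add_smul, h21]
      simp
    exact (smul_eq_zero.mp hz).resolve_left h4
  rw [hB0, hC0] at hblocks
  have hdet : A 0 0 * E.det = 1 := by
    have : h.det = h'.det := by rw [hre, Matrix.det_submatrix_equiv_self]
    rw [hd, hblocks, det_fromBlocks_zero₂₁, Matrix.det_fin_one] at this
    exact this.symm
  have hEdet : E.det ≠ 0 := fun h0 => by simp [h0] at hdet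
  have hA' : A = (E.det)⁻¹ • (1 : Matrix (Fin 1) (Fin 1) F) := by
    have hA00 : A 0 0 = (E.det)⁻¹ :=
      eq_inv_of_mul_eq_one_left (by rw [mul_comm] at hdet ⊢; exact hdet)
    ext i j
    fin_cases i; fin_cases j
    simp [hA00]
  refine ⟨E, hEdet, ?_⟩
  rw [hre, hblocks, hA']
  rfl

lemma e14s0 : (e14).symm (0:Fin 4) = Sum.inl 0 := rfl
lemma e14s1 : (e14).symm (1:Fin 4) = Sum.inr 0 := rfl
lemma e14s2 : (e14).symm (2:Fin 4) = Sum.inr 1 := rfl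
lemma e14s3 : (e14).symm (3:Fin 4) = Sum.inr 2 := rfl

lemma Dm_explicit (α : F) : Dm α = !![3*α,0,0,0;0,-α,0,0;0,0,-α,0;0,0,0,-α] := by
  ext i j
  fin_cases i <;> fin_cases j <;>
    simp [Dm, e14s0, e14s1, e14s2, e14s3, Matrix.one_apply, Fin.ext_iff,
      Matrix.vecHead, Matrix.vecTail]

def Pm (α : F) : Matrix (Fin 4) (Fin 4) F := !![1,1,0,0;0,-(4*α),0,0;0,0,1,0;0,0,0,1]
def Pinv (α : F) : Matrix (Fin 4) (Fin 4) F := !![1,(4*α)⁻¹,0,0;0,-(4*α)⁻¹,0,0;0,0,1,0;0,0,0,1]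

lemma PPinv {α : F} (h4 : (4:F)*α ≠ 0) : Pm α * Pinv α = 1 := by
  have h40 : (4:F) ≠ 0 := fun h => h4 (by simp [h])
  have hα : α ≠ 0 := fun h => h4 (by simp [h])
  ext i j
  fin_cases i <;> fin_cases j <;>
    simp [Pm, Pinv, Matrix.mul_apply, Fin.sum_univ_four, Matrix.one_apply,
      Matrix.vecHead, Matrix.vecTail] <;>
    field_simp <;> ring

lemma PinvP {α : F} (h4 : (4:F)*α ≠ 0) : Pinv α * Pm α = 1 := by
  have h40 : (4:F) ≠ 0 := fun h => h4 (by simp [h])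
  have hα : α ≠ 0 := fun h => h4 (by simp [h])
  ext i j
  fin_cases i <;> fin_cases j <;>
    simp [Pm, Pinv, Matrix.mul_apply, Fin.sum_univ_four, Matrix.one_apply,
      Matrix.vecHead, Matrix.vecTail] <;>
    field_simp <;> ring

lemma CP_eq_PD (α : F) :
    !![3 * α, 1, 0, 0; 0, -α, 0, 0; 0, 0, -α, 0; 0, 0, 0, -α] * Pm α = Pm α * Dm α := by
  rw [Dm_explicit]
  ext i j
  fin_cases i <;> fin_cases j <;>
    simp [Pm, Matrix.mul_apply, Fin.sum_univ_four, Matrix.vecHead, Matrix.vecTail] <;> ring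

/-- conjugation by `Pm` -/
def conj (α : F) (X : Matrix (Fin 4) (Fin 4) F) : Matrix (Fin 4) (Fin 4) F :=
  Pm α * X * Pinv α

lemma cancel1 {α : F} (h4 : (4:F)*α ≠ 0) (Z : Matrix (Fin 4) (Fin 4) F) :
    Pinv α * (Pm α * Z) = Z := by rw [← mul_assoc, PinvP h4, Matrix.one_mul]

lemma cancel2 {α : F} (h4 : (4:F)*α ≠ 0) (Z : Matrix (Fin 4) (Fin 4) F) :
    Pm α * (Pinv α * Z) = Z := by rw [← mul_assoc, PPinv h4, Matrix.one_mul]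

lemma conj_mul {α : F} (h4 : (4:F)*α ≠ 0) (X Y : Matrix (Fin 4) (Fin 4) F) :
    conj α X * conj α Y = conj α (X * Y) := by
  unfold conj
  simp only [mul_assoc, cancel1 h4, cancel2 h4]

lemma conj_det {α : F} (h4 : (4:F)*α ≠ 0) (X : Matrix (Fin 4) (Fin 4) F) :
    (conj α X).det = X.det := by
  have h1 : (Pm α).det * (Pinv α).det = 1 := by
    rw [← Matrix.det_mul, PPinv h4, Matrix.det_one]
  unfold conj
  rw [Matrix.det_mul, Matrix.det_mul]
  calc (Pm α).det * X.det * (Pinv α).det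
      = (Pm α).det * (Pinv α).det * X.det := by ring
    _ = X.det := by rw [h1, one_mul]

lemma conj_inj {α : F} (h4 : (4:F)*α ≠ 0) : Function.Injective (conj α) := by
  intro X Y h
  unfold conj at h
  have h2 := congrArg (fun Z => Pinv α * Z * Pm α) h
  simp only [mul_assoc, cancel1 h4] at h2
  calc X = X * (Pinv α * Pm α) := by rw [PinvP h4, Matrix.mul_one]
    _ = Y * (Pinv α * Pm α) := h2
    _ = Y := by rw [PinvP h4, Matrix.mul_one]

lemma conj_surj_elt {α : F} (h4 : (4:F)*α ≠ 0) (g : Matrix (Fin 4) (Fin 4) F) :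
    conj α (Pinv α * g * Pm α) = g := by
  unfold conj
  simp only [mul_assoc, cancel1 h4, cancel2 h4]
  rw [PPinv h4, Matrix.mul_one]

lemma C_eq_conj_D {α : F} (h4 : (4:F)*α ≠ 0) :
    !![3 * α, 1, 0, 0; 0, -α, 0, 0; 0, 0, -α, 0; 0, 0, 0, -α] = conj α (Dm α) := by
  unfold conj
  rw [← CP_eq_PD, mul_assoc, PPinv h4, Matrix.mul_one]

end
end Stmt11Aux




open Stmt11Aux

/-- The centralizer of a matrix `a` inside `SL₄(F)`. -/
def centralizerSL4 (F : Type*) [Field F] (a : Matrix (Fin 4) (Fin 4) F) :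
    Subgroup (Matrix.SpecialLinearGroup (Fin 4) F) where
  carrier := {g | (g : Matrix (Fin 4) (Fin 4) F) * a = a * g}
  one_mem' := by simp
  mul_mem' := by
    intro x y hx hy
    simp only [Set.mem_setOf_eq] at *
    rw [Matrix.SpecialLinearGroup.coe_mul, mul_assoc, hy, ← mul_assoc, hx, mul_assoc]
  inv_mem' := by
    intro g hg
    simp only [Set.mem_setOf_eq] at *
    have h1 : ((g⁻¹ : Matrix.SpecialLinearGroup (Fin 4) F) : Matrix (Fin 4) (Fin 4) F) *
        (g : Matrix (Fin 4) (Fin 4) F) = 1 := by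
      rw [← Matrix.SpecialLinearGroup.coe_mul, inv_mul_cancel]; rfl
    have h2 : (g : Matrix (Fin 4) (Fin 4) F) *
        ((g⁻¹ : Matrix.SpecialLinearGroup (Fin 4) F) : Matrix (Fin 4) (Fin 4) F) = 1 := by
      rw [← Matrix.SpecialLinearGroup.coe_mul, mul_inv_cancel]; rfl
    calc ((g⁻¹ : Matrix.SpecialLinearGroup (Fin 4) F) : Matrix (Fin 4) (Fin 4) F) * a
        = (↑g⁻¹ * a) * (↑g * ↑g⁻¹) := by rw [h2, mul_one]
      _ = (↑g⁻¹ * (a * ↑g)) * ↑g⁻¹ := by simp only [mul_assoc]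
      _ = (↑g⁻¹ * (↑g * a)) * ↑g⁻¹ := by rw [hg]
      _ = ((↑g⁻¹ * ↑g) * a) * ↑g⁻¹ := by simp only [mul_assoc]
      _ = a * ↑g⁻¹ := by rw [h1, one_mul]

/-- Assume `q` is odd and `α ∈ F`, `α ≠ 0`.  Then the group
`{g ∈ SL₄(F) : g · C_{[2,1,1]}(α) = C_{[2,1,1]}(α) · g}` is isomorphic to `GL₃(F)`. -/
theorem stmt_11 (F : Type*) [Field F] [Fintype F] (q : ℕ) (hq : Fintype.card F = q)
    (hodd : Odd q) (α : F) (hα : α ≠ 0) :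
    Nonempty
      ((centralizerSL4 F
          (!![3 * α, 1, 0, 0; 0, -α, 0, 0; 0, 0, -α, 0; 0, 0, 0, -α])) ≃*
        GL (Fin 3) F) := by
  classical
  have h2 : (2:F) ≠ 0 := by
    intro h
    have hdvd : ringChar F ∣ 2 := (ringChar.spec F 2).mp (by exact_mod_cast h)
    have hp : (ringChar F).Prime := CharP.char_is_prime F (ringChar F)
    have hchar2 : ringChar F = 2 := (Nat.prime_dvd_prime_iff_eq hp Nat.prime_two).mp hdvd
    have := (FiniteField.even_card_iff_char_two (F := F)).mp hchar2
    rw [hq] at this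
    rw [Nat.odd_iff] at hodd
    omega
  have h4 : (4:F)*α ≠ 0 := by
    have h40 : (4:F) ≠ 0 := by
      have : (4:F) = 2*2 := by norm_num
      rw [this]; exact mul_ne_zero h2 h2
    exact mul_ne_zero h40 hα
  have detne : ∀ M : GL (Fin 3) F, ((M : Matrix (Fin 3) (Fin 3) F)).det ≠ 0 := fun M =>
    ((Matrix.isUnit_iff_isUnit_det _).mp M.isUnit).ne_zero
  set Cm : Matrix (Fin 4) (Fin 4) F :=
    !![3 * α, 1, 0, 0; 0, -α, 0, 0; 0, 0, -α, 0; 0, 0, 0, -α] with hCm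
  have hCD : Cm = conj α (Dm α) := C_eq_conj_D h4
  refine ⟨(MulEquiv.ofBijective
    ({ toFun := fun M => ⟨⟨conj α (psi (M : Matrix (Fin 3) (Fin 3) F)),
          by rw [conj_det h4, det_psi (detne M)]⟩, by
          show conj α (psi (M : Matrix (Fin 3) (Fin 3) F)) * Cm
              = Cm * conj α (psi (M : Matrix (Fin 3) (Fin 3) F))
          rw [hCD, conj_mul h4, conj_mul h4, psi_comm]⟩
       map_one' := Subtype.ext (Subtype.ext (by
          show conj α (psi ((1 : GL (Fin 3) F) : Matrix (Fin 3) (Fin 3) F)) = 1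
          rw [Units.val_one, psi_one]
          show Pm α * 1 * Pinv α = 1
          rw [Matrix.mul_one, PPinv h4]))
       map_mul' := fun M N => Subtype.ext (Subtype.ext (by
          show conj α (psi ((M * N : GL (Fin 3) F) : Matrix (Fin 3) (Fin 3) F))
              = conj α (psi _) * conj α (psi _)
          rw [Units.val_mul, conj_mul h4, psi_mul])) } :
        GL (Fin 3) F →* centralizerSL4 F Cm) ?_).symm⟩
  constructor
  · intro M N h
    apply Units.ext
    apply psi_inj
    apply conj_inj h4
    exact Subtype.ext_iff.mp (Subtype.ext_iff.mp h)
  · intro g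
    set gm : Matrix (Fin 4) (Fin 4) F := ((g : Matrix.SpecialLinearGroup (Fin 4) F) :
      Matrix (Fin 4) (Fin 4) F) with hgm
    have hcommg : gm * Cm = Cm * gm := g.2
    set h := Pinv α * gm * Pm α with hh
    have e1 : conj α h = gm := conj_surj_elt h4 gm
    have hcomm' : h * Dm α = Dm α * h := by
      apply conj_inj h4
      rw [← conj_mul h4 h (Dm α), ← conj_mul h4 (Dm α) h, e1, ← hCD, hcommg]
    have hdet : h.det = 1 := by
      rw [← conj_det h4 h, e1]
      exact (g : Matrix.SpecialLinearGroup (Fin 4) F).prop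
    obtain ⟨E, hE, hhE⟩ := exists_psi h4 h hcomm' hdet
    refine ⟨Matrix.GeneralLinearGroup.mkOfDetNeZero E hE, ?_⟩
    apply Subtype.ext
    apply Subtype.ext
    show conj α (psi ((Matrix.GeneralLinearGroup.mkOfDetNeZero E hE :
        GL (Fin 3) F) : Matrix (Fin 3) (Fin 3) F)) = gm
    rw [show ((Matrix.GeneralLinearGroup.mkOfDetNeZero E hE :
        GL (Fin 3) F) : Matrix (Fin 3) (Fin 3) F) = E from rfl, ← hhE, e1]
end

section
/- Assume q is odd and α ∈ F with α ≠ 0. Then the Lie algebra {y ∈ Mat_4(F) : tr(y) = 0 and [C_{[2,1,1]}(α), y] = 0} (an F-Lie subalgebra of the 4×4 matrices under the commutator bracket [x,y] = xy − yx) is isomorphic as an F-Lie algebra to gl_3(F), the Lie algebra of all 3×3 matrices over F with the commutator bracket. -/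
/-!
Since `q` is odd, `4α ≠ 0`, so `C_{[2,1,1]}(α)` is diagonalizable: conjugating by a transvection
turns it into `diag(3α, -α, -α, -α)`, whose eigenvalues `3α ≠ -α` are distinct. Conjugation
preserves traces and brackets, so the algebra in question is isomorphic to the trace-zero part of
the centralizer of that diagonal matrix, i.e. of `gl₁ ⊕ gl₃`. There the `gl₁` corner is minus the
trace of the `gl₃` block, so projecting to the `3 × 3` block is a Lie isomorphism onto `gl₃(F)`.
-/

attribute [local instance 100] LieRing.ofAssociativeRing

/-- The Lie centralizer `{y ∈ Mat₄(F) : tr y = 0 ∧ ⁅a, y⁆ = 0}`, an `F`-Lie subalgebra of the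
`4×4` matrices with the commutator bracket. -/
def lieCentralizerSL4 (F : Type*) [Field F] (a : Matrix (Fin 4) (Fin 4) F) :
    LieSubalgebra F (Matrix (Fin 4) (Fin 4) F) where
  carrier := {y | Matrix.trace y = 0 ∧ ⁅a, y⁆ = 0}
  zero_mem' := by simp
  add_mem' := by
    intro y z hy hz
    exact ⟨by simp [Matrix.trace_add, hy.1, hz.1], by simp [lie_add, hy.2, hz.2]⟩
  smul_mem' := by
    intro c y hy
    exact ⟨by simp [Matrix.trace_smul, hy.1], by simp [lie_smul, hy.2]⟩
  lie_mem' := by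
    intro y z hy hz
    refine ⟨?_, ?_⟩
    · rw [Ring.lie_def, Matrix.trace_sub, Matrix.trace_mul_comm, sub_self]
    · rw [leibniz_lie, hy.2, hz.2]
      simp

namespace Matrix

variable {R : Type*} {n : ℕ} {ι : Type*} [Fintype ι] [DecidableEq ι]

theorem trace_eq_add_trace_submatrix_succ [AddCommMonoid R]
    (y : Matrix (Fin (n + 1)) (Fin (n + 1)) R) :
    y.trace = y 0 0 + (y.submatrix Fin.succ Fin.succ).trace :=
  Fin.sum_univ_succ _

theorem submatrix_succ_mul [NonUnitalNonAssocSemiring R] {y : Matrix (Fin (n + 1)) (Fin (n + 1)) R}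
    (hy : ∀ i : Fin n, y i.succ 0 = 0) (z : Matrix (Fin (n + 1)) (Fin (n + 1)) R) :
    (y * z).submatrix Fin.succ Fin.succ =
      y.submatrix Fin.succ Fin.succ * z.submatrix Fin.succ Fin.succ := by
  ext i j
  simp [mul_apply, Fin.sum_univ_succ, hy]

theorem commute_diagonal_iff [CommRing R] [NoZeroDivisors R] {d : ι → R} {y : Matrix ι ι R} :
    Commute (diagonal d) y ↔ ∀ i j, d i ≠ d j → y i j = 0 := by
  simp only [commute_iff_eq, ← ext_iff, diagonal_mul, mul_diagonal, ← sub_eq_zero (a := d _ * _),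
    mul_comm (y _ _), ← sub_mul, mul_eq_zero, sub_eq_zero]
  exact forall₂_congr fun i j => or_iff_not_imp_left

theorem commute_diagonal_cons_iff [CommRing R] [NoZeroDivisors R] {a b : R} (hab : a ≠ b)
    {y : Matrix (Fin (n + 1)) (Fin (n + 1)) R} :
    Commute (diagonal (Fin.cons a fun _ => b)) y ↔
      ∀ i : Fin n, y 0 i.succ = 0 ∧ y i.succ 0 = 0 := by
  rw [commute_diagonal_iff]
  refine ⟨fun h i => ⟨h _ _ (by simpa using hab), h _ _ (by simpa using hab.symm)⟩,
    fun h i j => ?_⟩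
  cases i using Fin.cases <;> cases j using Fin.cases <;> simp_all

abbrev invertibleTransvection [CommRing R] {i j : ι}
    (hij : i ≠ j) (c : R) : Invertible (transvection i j c) :=
  invertibleOfRightInverse _ (transvection i j (-c)) <|
    (transvection_mul_transvection_same i j hij c (-c)).trans (by simp)

theorem trace_lieConj [CommRing R] (P : Matrix ι ι R)
    (h : Invertible P) (y : Matrix ι ι R) : (P.lieConj h y).trace = y.trace := by
  rw [lieConj_apply, trace_mul_cycle, inv_mul_of_invertible, one_mul]

def lieEquivOfMemIffTraceZeroBlockDiagonal [CommRing R]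
    (K : LieSubalgebra R (Matrix (Fin (n + 1)) (Fin (n + 1)) R))
    (hK : ∀ y, y ∈ K ↔ y.trace = 0 ∧ ∀ i : Fin n, y 0 i.succ = 0 ∧ y i.succ 0 = 0) :
    K ≃ₗ⁅R⁆ Matrix (Fin n) (Fin n) R where
  toFun y := y.1.submatrix Fin.succ Fin.succ
  map_add' _ _ := rfl
  map_smul' _ _ := rfl
  map_lie' {y z} := by
    have hy := fun i => ((hK y).1 y.2).2 i |>.2
    have hz := fun i => ((hK z).1 z.2).2 i |>.2
    simp only [LieSubalgebra.coe_bracket, Ring.lie_def]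
    exact congrArg₂ (· - ·) (submatrix_succ_mul hy z) (submatrix_succ_mul hz y)
  invFun X := ⟨of (Fin.cons (Fin.cons (-X.trace) 0) fun i => Fin.cons 0 (X i)), by
    rw [hK, trace_eq_add_trace_submatrix_succ]
    exact ⟨neg_add_cancel _, fun _ => ⟨rfl, rfl⟩⟩⟩
  left_inv y := by
    obtain ⟨htr, hy⟩ := (hK y).1 y.2
    rw [trace_eq_add_trace_submatrix_succ, add_eq_zero_iff_neg_eq'] at htr
    ext i j
    cases i using Fin.cases <;> cases j using Fin.cases <;> simp [htr, hy]
  right_inv X := by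
    ext i j
    simp

end Matrix

section

open Matrix

variable {F : Type*} [Field F]

theorem lieCentralizerSL4_map (e : Matrix (Fin 4) (Fin 4) F ≃ₗ⁅F⁆ Matrix (Fin 4) (Fin 4) F)
    (he : ∀ y, (e y).trace = y.trace) (a : Matrix (Fin 4) (Fin 4) F) :
    (lieCentralizerSL4 F a).map (e : Matrix (Fin 4) (Fin 4) F →ₗ⁅F⁆ Matrix (Fin 4) (Fin 4) F) =
      lieCentralizerSL4 F (e a) := by
  ext y
  rw [LieSubalgebra.mem_map]
  constructor
  · rintro ⟨x, ⟨htr, hcomm⟩, rfl⟩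
    refine ⟨(he x).trans htr, ?_⟩
    simp [← LieEquiv.map_lie, hcomm]
  · rintro ⟨htr, hcomm⟩
    refine ⟨e.symm y, ⟨?_, ?_⟩, e.apply_symm_apply y⟩
    · rw [← he, e.apply_symm_apply, htr]
    · apply e.injective
      rw [LieHom.map_lie]
      simpa using hcomm

theorem mem_lieCentralizerSL4_diagonal_cons_iff {a b : F} (hab : a ≠ b)
    (y : Matrix (Fin 4) (Fin 4) F) :
    y ∈ lieCentralizerSL4 F (diagonal (Fin.cons a fun _ => b)) ↔
      y.trace = 0 ∧ ∀ i : Fin 3, y 0 i.succ = 0 ∧ y i.succ 0 = 0 :=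
  and_congr_right fun _ => commute_iff_lie_eq.symm.trans (commute_diagonal_cons_iff hab)

/-- `(1, (4α)⁻¹, 0, 0)` is a left eigenvector of `C_{[2,1,1]}(α)` for `3α`, and `e₁, e₂, e₃` are
left eigenvectors for `-α`. -/
theorem transvection_mul_C211 {α : F} (hα : 4 * α ≠ 0) :
    transvection 0 1 (4 * α)⁻¹ * !![3 * α, 1, 0, 0; 0, -α, 0, 0; 0, 0, -α, 0; 0, 0, 0, -α] =
      diagonal (Fin.cons (3 * α) fun _ => -α) * transvection 0 1 (4 * α)⁻¹ := by
  have hα₀ : α ≠ 0 := right_ne_zero_of_mul hα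
  have h4 : (4 : F) ≠ 0 := left_ne_zero_of_mul hα
  ext i j
  fin_cases i <;> fin_cases j <;> simp [transvection, mul_apply, Fin.sum_univ_four, single] <;>
    first | rfl | (field_simp; ring)

theorem FiniteField.two_ne_zero_of_odd_card [Fintype F] (h : Odd (Fintype.card F)) : (2 : F) ≠ 0 :=
  Ring.two_ne_zero fun hc =>
    Nat.not_even_iff_odd.mpr h (Nat.even_iff.mpr (FiniteField.even_card_of_char_two hc))

end

/-- Assume `q` is odd and `α ∈ F`, `α ≠ 0`.  Then the Lie algebra
`{y ∈ Mat₄(F) : tr(y) = 0 ∧ [C_{[2,1,1]}(α), y] = 0}` is isomorphic as an `F`-Lie algebra to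
`gl₃(F)`, the Lie algebra of all `3×3` matrices over `F` with the commutator bracket. -/
theorem stmt_12 (F : Type*) [Field F] [Fintype F] (q : ℕ) (hq : Fintype.card F = q)
    (hodd : Odd q) (α : F) (hα : α ≠ 0) :
    Nonempty
      ((lieCentralizerSL4 F
          (!![3 * α, 1, 0, 0; 0, -α, 0, 0; 0, 0, -α, 0; 0, 0, 0, -α])) ≃ₗ⁅F⁆
        Matrix (Fin 3) (Fin 3) F) := by
  subst hq
  have h4α : 4 * α ≠ 0 := by
    have h2 := FiniteField.two_ne_zero_of_odd_card hodd
    exact mul_ne_zero (by rw [show (4 : F) = 2 * 2 by norm_num]; exact mul_ne_zero h2 h2) hα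
  have hab : 3 * α ≠ -α := fun h => h4α (by linear_combination h)
  let hP := Matrix.invertibleTransvection (zero_ne_one : (0 : Fin 4) ≠ 1) (4 * α)⁻¹
  have hconj : (lieCentralizerSL4 F
      !![3 * α, 1, 0, 0; 0, -α, 0, 0; 0, 0, -α, 0; 0, 0, 0, -α]).map (Matrix.lieConj _ hP) =
      lieCentralizerSL4 F (Matrix.diagonal (Fin.cons (3 * α) fun _ => -α)) := by
    rw [lieCentralizerSL4_map _ (Matrix.trace_lieConj _ hP), Matrix.lieConj_apply,
      transvection_mul_C211 h4α, Matrix.mul_inv_cancel_right_of_invertible]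
  exact ⟨(LieEquiv.ofSubalgebras _ _ _ hconj).trans
    (Matrix.lieEquivOfMemIffTraceZeroBlockDiagonal _
      (mem_lieCentralizerSL4_diagonal_cons_iff hab))⟩
end
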